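/- Let p be a prime, F a field of characteristic p, and K/F a purely inseparable field extension with K^p ⊆ F. For x ∈ K and y ∈ K^×, the Frobenius twist Frob_{K/F}([x,y)_{p,K}) = F ⊗_K [x,y)_{p,K} (where F is viewed as a K-algebra via the Frobenius map z ↦ z^p) is isomorphic as an F-algebra to [x^p, y^p)_{p,F}. -/
import Mathlib


open scoped TensorProduct

/-- A finite-dimensional central simple algebra over a field `F`. -/
def IsCSA (F A : Type) [Field F] [Ring A] [Algebra F A] : Prop :=
  Algebra.IsCentral F A ∧ IsSimpleRing A ∧ FiniteDimensional F A

/-- An `F`-algebra is split if it is isomorphic to a matrix algebra over `F`. -/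
def IsSplitAlg (F A : Type) [Field F] [Ring A] [Algebra F A] : Prop :=
  ∃ n : ℕ, 0 < n ∧ Nonempty (A ≃ₐ[F] Matrix (Fin n) (Fin n) F)

/-- Brauer equivalence of two algebras over a field `F`. -/
def IsBrauerEquiv (F A B : Type) [Field F] [Ring A] [Algebra F A] [Ring B] [Algebra F B] :
    Prop :=
  ∃ n m : ℕ, 0 < n ∧ 0 < m ∧
    Nonempty ((Matrix (Fin n) (Fin n) A) ≃ₐ[F] (Matrix (Fin m) (Fin m) B))

/-- `A` has exponent `e`: `e` is the least positive integer such that the `e`-fold tensor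
power of `A` over `F` is split. -/
def HasExponent (F A : Type) [Field F] [Ring A] [Algebra F A] (e : ℕ) : Prop :=
  0 < e ∧ IsSplitAlg F (⨂[F] _ : Fin e, A) ∧
    ∀ k : ℕ, 0 < k → IsSplitAlg F (⨂[F] _ : Fin k, A) → e ≤ k

/-- `A` has (Schur) index `d`: `A` is isomorphic to a matrix algebra over a division
algebra of dimension `d ^ 2` over `F`. -/
def HasIndex (F A : Type) [Field F] [Ring A] [Algebra F A] (d : ℕ) : Prop :=
  ∃ (D : Type) (_ : DivisionRing D) (_ : Algebra F D) (m : ℕ), 0 < m ∧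
    Nonempty (A ≃ₐ[F] Matrix (Fin m) (Fin m) D) ∧ Module.finrank F D = d ^ 2

/-- The (Schur) index of `A` is at most `d`. -/
def IndexLE (F A : Type) [Field F] [Ring A] [Algebra F A] (d : ℕ) : Prop :=
  ∃ e : ℕ, e ≤ d ∧ HasIndex F A e

/-- `A` is the cyclic (symbol) algebra `[a, b)_{p,F}` of degree `p` in characteristic `p`:
it has dimension `p ^ 2` over `F` and is generated by elements `i`, `j` subject to
`i ^ p - i = a`, `j ^ p = b`, `j * i = (i - 1) * j`. -/
def IsCyclicAlgWith (p : ℕ) (F A : Type) [Field F] [Ring A] [Algebra F A] (a b : F) : Prop :=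
  b ≠ 0 ∧ Module.finrank F A = p ^ 2 ∧
    ∃ i j : A, i ^ p - i = algebraMap F A a ∧ j ^ p = algebraMap F A b ∧
      j * i = (i - 1) * j ∧ Algebra.adjoin F {i, j} = ⊤

/-- `A` is a cyclic algebra of degree `p`, i.e. of the form `[a, b)_{p,F}`. -/
def IsCyclicPAlg (p : ℕ) (F A : Type) [Field F] [Ring A] [Algebra F A] : Prop :=
  ∃ a b : F, IsCyclicAlgWith p F A a b

/-- The `p`-symbol length of `A` is at most `m`: `A` is Brauer equivalent to a tensor
product of at most `m` cyclic `F`-algebras of degree `p`. -/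
def SymbolLengthLE (p : ℕ) (F A : Type) [Field F] [Ring A] [Algebra F A] (m : ℕ) : Prop :=
  ∃ k : ℕ, k ≤ m ∧ ∃ (D : Fin k → Type) (_ : ∀ i, Ring (D i)) (_ : ∀ i, Algebra F (D i)),
    (∀ i, IsCyclicPAlg p F (D i)) ∧ IsBrauerEquiv F A (⨂[F] i, D i)

/-- `M` is a compositum `LK` of `L` and `K` over `F`: it is generated as an `F`-algebra by
the images of `L` and `K`. -/
def IsCompositum (F L K M : Type) [Field F] [Field L] [Field K] [Field M]
    [Algebra F L] [Algebra F K] [Algebra F M] [Algebra L M] [Algebra K M]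
    [IsScalarTower F L M] [IsScalarTower F K M] : Prop :=
  (IsScalarTower.toAlgHom F L M).range ⊔ (IsScalarTower.toAlgHom F K M).range = ⊤

/-- A cyclic algebra of degree `m` over `F`: a central simple `F`-algebra of degree `m`
containing a cyclic field extension of `F` of degree `m` (as a maximal subfield). -/
def IsCyclicAlgebra (F A : Type) [Field F] [Ring A] [Algebra F A] (m : ℕ) : Prop :=
  IsCSA F A ∧ Module.finrank F A = m ^ 2 ∧
  ∃ (L : Type) (_ : Field L) (_ : Algebra F L), IsGalois F L ∧ IsCyclic (L ≃ₐ[F] L) ∧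
    Module.finrank F L = m ∧ Nonempty (L →ₐ[F] A)

/-- `L/F` is a `p`-extension: there is a tower of intermediate fields from `F` to `L`
each step of which is a cyclic extension of degree `p`. -/
def IsPExtension (p : ℕ) (F L : Type) [Field F] [Field L] [Algebra F L] : Prop :=
  ∃ (n : ℕ) (T : Fin (n + 1) → IntermediateField F L),
    T 0 = ⊥ ∧ T (Fin.last n) = ⊤ ∧
    ∀ i : Fin n, ∃ h : T i.castSucc ≤ T i.succ,
      IsGalois (T i.castSucc) (IntermediateField.extendScalars h) ∧
      IsCyclic ((IntermediateField.extendScalars h) ≃ₐ[T i.castSucc]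
        (IntermediateField.extendScalars h)) ∧
      Module.finrank (T i.castSucc) (IntermediateField.extendScalars h) = p

/-- `F` is `p`-cyclic reducible: for every central simple `F`-algebra `A` of exponent `p`
and every purely inseparable extension `K/F` with `K ^ p ⊆ F`, either `A_K` is split, or
there is a separable extension `L/F` of degree `ind (A_K) / p` such that `A_{LK}` is
Brauer equivalent to a cyclic `LK`-algebra of degree `p`. -/
def IsPCyclicReducible (p : ℕ) (F : Type) [Field F] : Prop :=
  ∀ (A : Type) [Ring A] [Algebra F A], IsCSA F A → HasExponent F A p →
  ∀ (K : Type) [Field K] [Algebra F K], IsPurelyInseparable F K →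
    (∀ z : K, z ^ p ∈ (algebraMap F K).range) →
    IsSplitAlg K (K ⊗[F] A) ∨
    ∃ d : ℕ, HasIndex K (K ⊗[F] A) (p * d) ∧
      ∃ (L : Type) (_ : Field L) (_ : Algebra F L), Algebra.IsSeparable F L ∧
        Module.finrank F L = d ∧
        ∃ (M : Type) (_ : Field M) (_ : Algebra F M) (_ : Algebra L M) (_ : Algebra K M)
          (_ : IsScalarTower F L M) (_ : IsScalarTower F K M),
          IsCompositum F L K M ∧
          ∃ (C : Type) (_ : Ring C) (_ : Algebra M C),
            IsCyclicPAlg p M C ∧ IsBrauerEquiv M (M ⊗[F] A) C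

/-- `F` is `p`-reducible: for every central simple `F`-algebra `A` of exponent `p`
and every purely inseparable extension `K/F` with `K ^ p ⊆ F`, either `A_K` is split, or
there is a separable extension `L/F` of degree `ind (A_K) / p` with `ind A_{LK} = p`. -/
def IsPReducible (p : ℕ) (F : Type) [Field F] : Prop :=
  ∀ (A : Type) [Ring A] [Algebra F A], IsCSA F A → HasExponent F A p →
  ∀ (K : Type) [Field K] [Algebra F K], IsPurelyInseparable F K →
    (∀ z : K, z ^ p ∈ (algebraMap F K).range) →
    IsSplitAlg K (K ⊗[F] A) ∨
    ∃ d : ℕ, HasIndex K (K ⊗[F] A) (p * d) ∧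
      ∃ (L : Type) (_ : Field L) (_ : Algebra F L), Algebra.IsSeparable F L ∧
        Module.finrank F L = d ∧
        ∃ (M : Type) (_ : Field M) (_ : Algebra F M) (_ : Algebra L M) (_ : Algebra K M)
          (_ : IsScalarTower F L M) (_ : IsScalarTower F K M),
          IsCompositum F L K M ∧ HasIndex M (M ⊗[F] A) p
/-- For a purely inseparable extension `K/F` with `K ^ p ⊆ F` and the
Frobenius homomorphism `φ : K → F` (characterized by `algebraMap F K (φ z) = z ^ p`),
the Frobenius twist `F ⊗[K] [x, y)_{p,K}` of the cyclic algebra `[x, y)_{p,K}` is the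
cyclic `F`-algebra `[x', y')_{p,F}`, where `x'`, `y'` are the elements of `F` mapping to
`x ^ p`, `y ^ p` in `K`. -/
theorem statement15 (p : ℕ) (hp : p.Prime) (F : Type) [Field F] [CharP F p]
    (K : Type) [Field K] [Algebra F K] [IsPurelyInseparable F K]
    (hKp : ∀ z : K, z ^ p ∈ (algebraMap F K).range)
    (φ : K →+* F) (hφ : ∀ z : K, algebraMap F K (φ z) = z ^ p)
    (x y : K) (C : Type) [Ring C] [Algebra K C] (hC : IsCyclicAlgWith p K C x y)
    (x' y' : F) (hx' : algebraMap F K x' = x ^ p) (hy' : algebraMap F K y' = y ^ p) :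
    letI : Algebra K F := φ.toAlgebra
    IsCyclicAlgWith p F (F ⊗[K] C) x' y' := by
  
  letI : Algebra K F := φ.toAlgebra
  obtain ⟨hy, hrank, i, j, hi, hj, hji, hadj⟩ := hC
  have hinj := (algebraMap F K).injective
  have hφx : φ x = x' := hinj (by rw [hφ, hx'])
  have hφy : φ y = y' := hinj (by rw [hφ, hy'])
  have hsmul : ∀ (z : K) (β : F), z • β = φ z * β := fun z β => rfl
  have key : ∀ (z : K) (β : F), β ⊗ₜ[K] (algebraMap K C z) = (φ z * β) ⊗ₜ[K] (1 : C) := by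
    intro z β
    rw [Algebra.algebraMap_eq_smul_one, TensorProduct.tmul_smul, TensorProduct.smul_tmul',
      hsmul]
  refine ⟨?_, ?_, (1 : F) ⊗ₜ[K] i, (1 : F) ⊗ₜ[K] j, ?_, ?_, ?_, ?_⟩
  · intro h
    apply hy
    have : algebraMap F K y' = 0 := by rw [h, map_zero]
    rw [hy'] at this
    exact pow_eq_zero_iff hp.ne_zero |>.mp this
  · rw [Module.finrank_baseChange, hrank]
  · rw [Algebra.TensorProduct.tmul_pow, one_pow, ← TensorProduct.tmul_sub, hi,
      key, hφx, mul_one, Algebra.TensorProduct.algebraMap_apply]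
    rfl
  · rw [Algebra.TensorProduct.tmul_pow, one_pow, hj, key, hφy, mul_one,
      Algebra.TensorProduct.algebraMap_apply]
    rfl
  · rw [Algebra.TensorProduct.tmul_mul_tmul, one_mul, hji, Algebra.TensorProduct.one_def,
      ← TensorProduct.tmul_sub, Algebra.TensorProduct.tmul_mul_tmul, one_mul]
  · rw [eq_top_iff]
    set S := Algebra.adjoin F {(1 : F) ⊗ₜ[K] i, (1 : F) ⊗ₜ[K] j} with hS
    have hmem : ∀ (c : C) (β : F), β ⊗ₜ[K] c ∈ S := by
      intro c
      have hc : c ∈ Algebra.adjoin K {i, j} := hadj ▸ Algebra.mem_top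
      induction hc using Algebra.adjoin_induction with
      | mem z hz =>
        intro β
        have hβ : β ⊗ₜ[K] z = β • ((1 : F) ⊗ₜ[K] z) := by
          rw [TensorProduct.smul_tmul', smul_eq_mul, mul_one]
        rcases hz with rfl | rfl
        · exact hβ ▸ S.smul_mem (Algebra.subset_adjoin (by simp)) β
        · exact hβ ▸ S.smul_mem (Algebra.subset_adjoin (by simp)) β
      | algebraMap r =>
        intro β
        rw [key]
        exact S.algebraMap_mem (φ r * β)
      | add a b _ _ ha hb =>
        intro β
        rw [TensorProduct.tmul_add]
        exact S.add_mem (ha β) (hb β)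
      | mul a b _ _ ha hb =>
        intro β
        have : β ⊗ₜ[K] (a * b) = (β ⊗ₜ[K] a) * ((1 : F) ⊗ₜ[K] b) := by
          rw [Algebra.TensorProduct.tmul_mul_tmul, mul_one]
        exact this ▸ S.mul_mem (ha β) (hb 1)
    rintro z -
    induction z with
    | zero => exact S.zero_mem
    | tmul β c => exact hmem c β
    | add a b ha hb => exact S.add_mem ha hb
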